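/- For real sequences, if $a_i \geq 0$ for all $i$, $\beta \in [0,1)$, and $b_i = \sum_{k=1}^{i} \beta^{i-k} \sum_{l=k+1}^{i} a_l$, then $\sum_{i=1}^{t} b_i^2 \leq \left(\frac{1}{1-\beta}\right)^2 \left(\frac{\beta}{1-\beta}\right)^2 \sum_{i=2}^{t} a_i^2$. -/
import Mathlib


open Finset

private lemma geom_bound {β : ℝ} (hβ0 : 0 ≤ β) (hβ1 : β < 1) (m : ℕ) :
    ∑ j ∈ range m, β ^ j ≤ 1 / (1 - β) := by
  have h1 : 0 < 1 - β := by linarith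
  rw [geom_sum_eq (by linarith : β ≠ 1)]
  have h : (β ^ m - 1) / (β - 1) = (1 - β ^ m) / (1 - β) := by
    rw [← neg_div_neg_eq]; ring_nf
  rw [h]
  have hm := pow_nonneg hβ0 m
  exact div_le_div₀ (by norm_num) (by linarith) h1 le_rfl

private lemma reindex1 (β : ℝ) (m : ℕ) :
    ∑ k ∈ Icc 1 m, β ^ (m - k) = ∑ j ∈ range m, β ^ j := by
  apply Finset.sum_nbij' (fun k => m - k) (fun j => m - j)
  · simp only [mem_Icc, mem_range]; intros; omega
  · simp only [mem_Icc, mem_range]; intros; omega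
  · simp only [mem_Icc, mem_range]; intros; omega
  · simp only [mem_Icc, mem_range]; intros; omega
  · intros; rfl

private lemma reindex2 (β : ℝ) (l t : ℕ) :
    ∑ i ∈ Icc l t, β ^ (i - l) = ∑ j ∈ range (t + 1 - l), β ^ j := by
  apply Finset.sum_nbij' (fun i => i - l) (fun j => j + l)
  · simp only [mem_Icc, mem_range]; intros; omega
  · simp only [mem_Icc, mem_range]; intros; omega
  · simp only [mem_Icc, mem_range]; intros; omega
  · simp only [mem_Icc, mem_range]; intros; omega
  · intros; rfl

theorem stmt_0 (t : ℕ) (ht : 1 ≤ t) (β : ℝ) (hβ0 : 0 ≤ β) (hβ1 : β < 1)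
    (a b : ℕ → ℝ) (ha : ∀ i, 0 ≤ a i)
    (hb : ∀ i, b i = ∑ k ∈ Icc 1 i, β ^ (i - k) * ∑ l ∈ Icc (k + 1) i, a l) :
    ∑ i ∈ Icc 1 t, (b i) ^ 2 ≤
      (1 / (1 - β)) ^ 2 * (β / (1 - β)) ^ 2 * ∑ i ∈ Icc 2 t, (a i) ^ 2 := by
  have h1 : 0 < 1 - β := by linarith
  set K : ℝ := 1 / (1 - β) with hK
  have hK0 : 0 ≤ K := by positivity
  set c : ℕ → ℝ := fun i => ∑ l ∈ Icc 2 i, β ^ (i - l) * a l with hc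
  set d : ℕ → ℝ := fun i => ∑ l ∈ Icc 2 i, β ^ (i - l) * (a l) ^ 2 with hd
  have hc0 : ∀ i, 0 ≤ c i := fun i =>
    Finset.sum_nonneg fun l _ => mul_nonneg (pow_nonneg hβ0 _) (ha l)
  have hd0 : ∀ i, 0 ≤ d i := fun i =>
    Finset.sum_nonneg fun l _ => mul_nonneg (pow_nonneg hβ0 _) (sq_nonneg _)
  -- Step 1: b i ≤ β * K * c i
  have hb0 : ∀ i, 0 ≤ b i := by
    intro i
    rw [hb i]
    refine Finset.sum_nonneg fun k _ => mul_nonneg (pow_nonneg hβ0 _) ?_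
    exact Finset.sum_nonneg fun l _ => ha l
  have step1 : ∀ i, b i ≤ β * K * c i := by
    intro i
    rw [hb i]
    have swap : ∑ k ∈ Icc 1 i, β ^ (i - k) * ∑ l ∈ Icc (k + 1) i, a l
        = ∑ l ∈ Icc 2 i, ∑ k ∈ Icc 1 (l - 1), β ^ (i - k) * a l := by
      simp_rw [Finset.mul_sum]
      apply Finset.sum_comm'
      intro k l
      simp only [mem_Icc]
      omega
    rw [swap, hc]
    simp only
    rw [Finset.mul_sum]
    apply Finset.sum_le_sum
    intro l hl
    simp only [mem_Icc] at hl
    rw [← Finset.sum_mul]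
    have key : ∑ k ∈ Icc 1 (l - 1), β ^ (i - k) ≤ β * K * β ^ (i - l) := by
      have e : ∀ k ∈ Icc 1 (l - 1), β ^ (i - k) = β ^ (i - l + 1) * β ^ (l - 1 - k) := by
        intro k hk
        simp only [mem_Icc] at hk
        rw [← pow_add]
        congr 1
        omega
      rw [Finset.sum_congr rfl e, ← Finset.mul_sum]
      have := reindex1 β (l - 1)
      rw [this]
      have hg := geom_bound hβ0 hβ1 (l - 1)
      have hp : (0:ℝ) ≤ β ^ (i - l + 1) := pow_nonneg hβ0 _
      calc β ^ (i - l + 1) * ∑ j ∈ range (l - 1), β ^ j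
          ≤ β ^ (i - l + 1) * K := by apply mul_le_mul_of_nonneg_left hg hp
        _ = β * K * β ^ (i - l) := by rw [pow_succ]; ring
    calc (∑ k ∈ Icc 1 (l - 1), β ^ (i - k)) * a l
        ≤ β * K * β ^ (i - l) * a l := mul_le_mul_of_nonneg_right key (ha l)
      _ = β * K * (β ^ (i - l) * a l) := by ring
  -- Step 2: c i ^ 2 ≤ K * d i
  have step2 : ∀ i, (c i) ^ 2 ≤ K * d i := by
    intro i
    set s : ℝ := Real.sqrt β with hs
    have hs2 : s ^ 2 = β := Real.sq_sqrt hβ0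
    have hs0 : 0 ≤ s := Real.sqrt_nonneg β
    have expand : ∀ l, β ^ (i - l) * a l = s ^ (i - l) * (s ^ (i - l) * a l) := by
      intro l
      rw [← mul_assoc, ← pow_add, ← two_mul, pow_mul, hs2]
    have cs := Finset.sum_mul_sq_le_sq_mul_sq (Icc 2 i) (fun l => s ^ (i - l))
      (fun l => s ^ (i - l) * a l)
    have e1 : ∑ l ∈ Icc 2 i, s ^ (i - l) * (s ^ (i - l) * a l) = c i := by
      rw [hc]; exact Finset.sum_congr rfl fun l _ => (expand l).symm
    have e2 : ∑ l ∈ Icc 2 i, (s ^ (i - l)) ^ 2 = ∑ l ∈ Icc 2 i, β ^ (i - l) := by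
      refine Finset.sum_congr rfl fun l _ => ?_
      rw [← pow_mul, mul_comm (i - l) 2, pow_mul, hs2]
    have e3 : ∑ l ∈ Icc 2 i, (s ^ (i - l) * a l) ^ 2 = d i := by
      rw [hd]
      refine Finset.sum_congr rfl fun l _ => ?_
      rw [mul_pow, ← pow_mul, mul_comm (i - l) 2, pow_mul, hs2]
    rw [e1, e2, e3] at cs
    refine cs.trans ?_
    have hsum : ∑ l ∈ Icc 2 i, β ^ (i - l) ≤ K := by
      have e4 : ∑ l ∈ Icc 2 i, β ^ (i - l) ≤ ∑ l ∈ Icc 1 i, β ^ (i - l) := by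
        apply Finset.sum_le_sum_of_subset_of_nonneg
        · apply Finset.Icc_subset_Icc_left; omega
        · intros; exact pow_nonneg hβ0 _
      refine e4.trans ?_
      rw [reindex1 β i]
      exact geom_bound hβ0 hβ1 i
    exact mul_le_mul_of_nonneg_right hsum (hd0 i)
  -- Step 3: sum of d
  have step3 : ∑ i ∈ Icc 1 t, d i ≤ K * ∑ l ∈ Icc 2 t, (a l) ^ 2 := by
    have swap : ∑ i ∈ Icc 1 t, d i
        = ∑ l ∈ Icc 2 t, ∑ i ∈ Icc l t, β ^ (i - l) * (a l) ^ 2 := by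
      simp only [hd]
      apply Finset.sum_comm'
      intro i l
      simp only [mem_Icc]
      omega
    rw [swap, Finset.mul_sum]
    apply Finset.sum_le_sum
    intro l hl
    rw [← Finset.sum_mul]
    refine mul_le_mul_of_nonneg_right ?_ (sq_nonneg _)
    rw [reindex2 β l t]
    exact geom_bound hβ0 hβ1 _
  -- Combine
  have main : ∑ i ∈ Icc 1 t, (b i) ^ 2 ≤ (β * K) ^ 2 * (K * (K * ∑ l ∈ Icc 2 t, (a l) ^ 2)) := by
    calc ∑ i ∈ Icc 1 t, (b i) ^ 2
        ≤ ∑ i ∈ Icc 1 t, (β * K * c i) ^ 2 := by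
          apply Finset.sum_le_sum
          intro i _
          exact pow_le_pow_left₀ (hb0 i) (step1 i) 2
      _ = (β * K) ^ 2 * ∑ i ∈ Icc 1 t, (c i) ^ 2 := by
          rw [Finset.mul_sum]; exact Finset.sum_congr rfl fun i _ => by ring
      _ ≤ (β * K) ^ 2 * ∑ i ∈ Icc 1 t, (K * d i) := by
          refine mul_le_mul_of_nonneg_left ?_ (sq_nonneg _)
          exact Finset.sum_le_sum fun i _ => step2 i
      _ = (β * K) ^ 2 * (K * ∑ i ∈ Icc 1 t, d i) := by
          simp only [Finset.mul_sum]
      _ ≤ (β * K) ^ 2 * (K * (K * ∑ l ∈ Icc 2 t, (a l) ^ 2)) := by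
          refine mul_le_mul_of_nonneg_left ?_ (sq_nonneg _)
          exact mul_le_mul_of_nonneg_left step3 hK0
  refine main.trans_eq ?_
  rw [div_eq_mul_one_div β (1 - β), ← hK]
  ring
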